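/- arXiv:2307.09110 — 4 statements merged into one kernel-verified Lean document; each statement's English description precedes it below -/
import Mathlib

section
/- Let V be a finite set, e ⊆ V, and g : 2^e → ℝ≥0 a submodular function with g(∅) = 0. For u, v ∈ V define the minimum directed cut g^{u→v} := min over S ⊆ V with u ∈ S and v ∉ S of g(S ∩ e). Then for every S ⊂ V with S ≠ ∅ and S ≠ V, max over u ∈ S, v ∈ V∖S of g^{u→v} ≤ g(S ∩ e) ≤ ∑ over u ∈ S, v ∈ V∖S of g^{u→v}. -/
/-!
Choose for every `u ≠ v` a set `F u v` realising `dirCut g e u v`. For `∅ ≠ S ≠ V`,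
`S = ⋃_{u ∈ S} ⋂_{v ∉ S} F u v`, and a nonnegative submodular function is subadditive over
both `∪` and `∩`; applying this to `A ↦ g (A ∩ e)` bounds `g (S ∩ e)` by the double sum.
The other inequality holds because `S` itself is a candidate for every `dirCut g e u v`.
-/

/-- The minimum directed cut of a splitting function `g` on hyperedge `e`
between `u` and `v`: the infimum of `g (S ∩ e)` over sets `S` with `u ∈ S`
and `v ∉ S` (equals `0` by convention when there is no such set). -/
noncomputable def dirCut {V : Type*} [Fintype V] [DecidableEq V]
    (g : Finset V → ℝ) (e : Finset V) (u v : V) : ℝ :=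
  sInf {x : ℝ | ∃ S : Finset V, u ∈ S ∧ v ∉ S ∧ x = g (S ∩ e)}

section Subadditive

variable {α β ι : Type*} [AddCommMonoid β] [PartialOrder β] [IsOrderedAddMonoid β]

theorem Finset.apply_sup'_le_sum [SemilatticeSup α] {f : α → β}
    (hf : ∀ a b, f (a ⊔ b) ≤ f a + f b) (s : Finset ι) (hs : s.Nonempty) (F : ι → α) :
    f (s.sup' hs F) ≤ ∑ i ∈ s, f (F i) := by
  induction hs using Finset.Nonempty.cons_induction with
  | singleton i => simp
  | cons i s hi hs ih =>
    rw [Finset.sup'_cons hs, Finset.sum_cons]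
    exact (hf _ _).trans (add_le_add_right ih _)

theorem Finset.apply_inf'_le_sum [SemilatticeInf α] {f : α → β}
    (hf : ∀ a b, f (a ⊓ b) ≤ f a + f b) (s : Finset ι) (hs : s.Nonempty) (F : ι → α) :
    f (s.inf' hs F) ≤ ∑ i ∈ s, f (F i) :=
  Finset.apply_sup'_le_sum (α := αᵒᵈ) hf s hs F

variable [Lattice α] {f : α → β}

theorem apply_sup_le_add_of_submodular (hf0 : ∀ a, 0 ≤ f a)
    (hf : ∀ a b, f (a ⊔ b) + f (a ⊓ b) ≤ f a + f b) (a b : α) :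
    f (a ⊔ b) ≤ f a + f b :=
  (le_add_of_nonneg_right (hf0 _)).trans (hf a b)

theorem apply_inf_le_add_of_submodular (hf0 : ∀ a, 0 ≤ f a)
    (hf : ∀ a b, f (a ⊔ b) + f (a ⊓ b) ≤ f a + f b) (a b : α) :
    f (a ⊓ b) ≤ f a + f b :=
  (le_add_of_nonneg_left (hf0 _)).trans (hf a b)

end Subadditive

section DirCut

variable {V : Type*} [DecidableEq V] (g : Finset V → ℝ) (e : Finset V)

theorem restrict_submodular
    (hsub : ∀ A ⊆ e, ∀ B ⊆ e, g (A ∪ B) + g (A ∩ B) ≤ g A + g B) (A B : Finset V) :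
    g ((A ⊔ B) ∩ e) + g ((A ⊓ B) ∩ e) ≤ g (A ∩ e) + g (B ∩ e) := by
  rw [Finset.sup_eq_union, Finset.inf_eq_inter, Finset.union_inter_distrib_right,
    Finset.inter_inter_distrib_right]
  exact hsub _ Finset.inter_subset_right _ Finset.inter_subset_right

variable [Fintype V]

theorem finite_dirCut_candidates (u v : V) :
    {x : ℝ | ∃ S : Finset V, u ∈ S ∧ v ∉ S ∧ x = g (S ∩ e)}.Finite :=
  (Set.finite_range fun S : Finset V => g (S ∩ e)).subset
    fun _ ⟨S, _, _, hx⟩ => ⟨S, hx.symm⟩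

theorem dirCut_le {u v : V} {S : Finset V} (hu : u ∈ S) (hv : v ∉ S) :
    dirCut g e u v ≤ g (S ∩ e) :=
  csInf_le (finite_dirCut_candidates g e u v).bddBelow ⟨S, hu, hv, rfl⟩

theorem exists_eq_dirCut {u v : V} (huv : u ≠ v) :
    ∃ T : Finset V, u ∈ T ∧ v ∉ T ∧ g (T ∩ e) = dirCut g e u v := by
  have hne : {x : ℝ | ∃ S : Finset V, u ∈ S ∧ v ∉ S ∧ x = g (S ∩ e)}.Nonempty :=
    ⟨_, {u}, Finset.mem_singleton_self u, by simpa using huv.symm, rfl⟩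
  obtain ⟨T, huT, hvT, hT⟩ := hne.csInf_mem (finite_dirCut_candidates g e u v)
  exact ⟨T, huT, hvT, hT.symm⟩

theorem exists_dirCut_minimizers : ∃ F : V → V → Finset V, ∀ u v, u ≠ v →
    u ∈ F u v ∧ v ∉ F u v ∧ g (F u v ∩ e) = dirCut g e u v := by
  have hcut (u v : V) :
      ∃ T : Finset V, u ≠ v → u ∈ T ∧ v ∉ T ∧ g (T ∩ e) = dirCut g e u v := by
    by_cases huv : u = v
    · exact ⟨∅, fun h => (h huv).elim⟩
    · exact (exists_eq_dirCut g e huv).imp fun _ h _ => h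
  choose F hF using hcut
  exact ⟨F, hF⟩

end DirCut

theorem Finset.eq_sup'_inf'_of_separating {V : Type*} [Fintype V] [DecidableEq V]
    {S : Finset V} (hS : S.Nonempty) (hSc : Sᶜ.Nonempty) (F : V → V → Finset V)
    (hF : ∀ u ∈ S, ∀ v ∈ Sᶜ, u ∈ F u v ∧ v ∉ F u v) :
    S = S.sup' hS fun u => Sᶜ.inf' hSc (F u) := by
  apply le_antisymm
  · intro u hu
    exact Finset.le_sup' (fun u => Sᶜ.inf' hSc (F u)) hu
      (by simpa using fun v hv => (hF u hu v hv).1)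
  · refine Finset.sup'_le hS _ fun u hu x hx => ?_
    by_contra hxS
    have hxSc : x ∈ Sᶜ := Finset.mem_compl.2 hxS
    exact (hF u hu x hxSc).2 (Finset.inf'_le (F u) hxSc hx)

theorem stmt2_general {V : Type*} [Fintype V] [DecidableEq V]
    (e : Finset V) (g : Finset V → ℝ)
    (hnn : ∀ S ⊆ e, 0 ≤ g S)
    (hsub : ∀ A ⊆ e, ∀ B ⊆ e, g (A ∪ B) + g (A ∩ B) ≤ g A + g B) :
    ∀ S : Finset V, S ≠ ∅ → S ≠ Finset.univ →
      (∀ u ∈ S, ∀ v ∈ Sᶜ, dirCut g e u v ≤ g (S ∩ e)) ∧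
      g (S ∩ e) ≤ ∑ u ∈ S, ∑ v ∈ Sᶜ, dirCut g e u v := by
  intro S hS hSuniv
  refine ⟨fun u hu v hv => dirCut_le g e hu (Finset.mem_compl.1 hv), ?_⟩
  have hS' : S.Nonempty := Finset.nonempty_iff_ne_empty.2 hS
  have hSc : Sᶜ.Nonempty :=
    Finset.nonempty_iff_ne_empty.2 (by rwa [Ne, Finset.compl_eq_empty_iff])
  have hne : ∀ u ∈ S, ∀ v ∈ Sᶜ, u ≠ v := fun u hu v hv huv =>
    Finset.mem_compl.1 hv (huv ▸ hu)
  have hf0 (A : Finset V) : 0 ≤ g (A ∩ e) := hnn _ Finset.inter_subset_right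
  have hfsub := restrict_submodular g e hsub
  obtain ⟨F, hF⟩ := exists_dirCut_minimizers g e
  calc g (S ∩ e)
      = g ((S.sup' hS' fun u => Sᶜ.inf' hSc (F u)) ∩ e) := by
        rw [← Finset.eq_sup'_inf'_of_separating hS' hSc F
          fun u hu v hv => ⟨(hF u v (hne u hu v hv)).1, (hF u v (hne u hu v hv)).2.1⟩]
    _ ≤ ∑ u ∈ S, g (Sᶜ.inf' hSc (F u) ∩ e) :=
        Finset.apply_sup'_le_sum (f := fun A => g (A ∩ e))
          (apply_sup_le_add_of_submodular hf0 hfsub) S hS' _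
    _ ≤ ∑ u ∈ S, ∑ v ∈ Sᶜ, g (F u v ∩ e) := Finset.sum_le_sum fun u _ =>
        Finset.apply_inf'_le_sum (f := fun A => g (A ∩ e))
          (apply_inf_le_add_of_submodular hf0 hfsub) Sᶜ hSc (F u)
    _ = ∑ u ∈ S, ∑ v ∈ Sᶜ, dirCut g e u v :=
        Finset.sum_congr rfl fun u hu => Finset.sum_congr rfl fun v hv =>
          (hF u v (hne u hu v hv)).2.2

theorem stmt2 {V : Type*} [Fintype V] [DecidableEq V]
    (e : Finset V) (g : Finset V → ℝ)
    (hg0 : g ∅ = 0)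
    (hnn : ∀ S ⊆ e, 0 ≤ g S)
    (hsub : ∀ A ⊆ e, ∀ B ⊆ e, g (A ∪ B) + g (A ∩ B) ≤ g A + g B) :
    ∀ S : Finset V, S ≠ ∅ → S ≠ Finset.univ →
      (∀ u ∈ S, ∀ v ∈ Sᶜ, dirCut g e u v ≤ g (S ∩ e)) ∧
      g (S ∩ e) ≤ ∑ u ∈ S, ∑ v ∈ Sᶜ, dirCut g e u v :=
  stmt2_general e g hnn hsub
end

section
/- Let V be finite, e ⊆ V, g : 2^e → ℝ≥0 submodular with g(∅) = 0, and for u ∈ S, v ∈ V∖S let P^{u→v} ⊆ V be any set with u ∈ P^{u→v}, v ∉ P^{u→v} minimizing g(P ∩ e) among sets containing u and not v (and set P^{u→v} = ∅ whenever u ∉ e). Then S ∩ e = ⋃_{u ∈ S} ⋂_{v ∈ V∖S} (P^{u→v} ∩ e) for every nonempty proper subset S of V. -/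
/-! For `u ∈ S ∩ e` every set `P u v` contains `u`, so `u` lies in its own intersection
`⋂_{v ∉ S} (P u v ∩ e)`. Conversely each such intersection misses every `v ∉ S`, because
`v ∉ P u v` (trivially so when `P u v = ∅`), and lies in `e` as soon as `S ≠ V`. -/

open Finset

namespace Finset

variable {V ι : Type*} [Fintype V] [DecidableEq V]

theorem inf_subset_compl_of_notMem {T : Finset V} {Q : V → Finset V}
    (hQ : ∀ v ∈ T, v ∉ Q v) : T.inf Q ⊆ Tᶜ := fun x hx =>
  mem_compl.2 fun hxT => hQ x hxT (mem_inf.1 hx x hxT)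

theorem inf_inter_subset_right {s : Finset ι} (hs : s.Nonempty) (f : ι → Finset V)
    (e : Finset V) : s.inf (fun i => f i ∩ e) ⊆ e := by
  obtain ⟨i, hi⟩ := hs
  exact (inf_le (f := fun i => f i ∩ e) hi).trans inter_subset_right

theorem inter_eq_biUnion_inf_of_separating {S : Finset V} (hSV : S ≠ univ) (e : Finset V)
    (P : V → V → Finset V) (hmem : ∀ u ∈ S ∩ e, ∀ v ∈ Sᶜ, u ∈ P u v)
    (hnotMem : ∀ u ∈ S, ∀ v ∈ Sᶜ, v ∉ P u v) :
    S ∩ e = S.biUnion (fun u => Sᶜ.inf (fun v => P u v ∩ e)) := by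
  have hSc : Sᶜ.Nonempty := nonempty_iff_ne_empty.2 ((compl_eq_empty_iff S).not.2 hSV)
  apply Subset.antisymm
  · intro u hu
    exact mem_biUnion.2 ⟨u, (mem_inter.1 hu).1,
      mem_inf.2 fun v hv => mem_inter.2 ⟨hmem u hu v hv, (mem_inter.1 hu).2⟩⟩
  · refine biUnion_subset.2 fun u hu => subset_inter ?_ (inf_inter_subset_right hSc _ e)
    have hsep : ∀ v ∈ Sᶜ, v ∉ P u v ∩ e := fun v hv hve => hnotMem u hu v hv (mem_inter.1 hve).1
    simpa using inf_subset_compl_of_notMem hsep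

end Finset

theorem stmt3_general {V : Type*} [Fintype V] [DecidableEq V]
    (e : Finset V) (g : Finset V → ℝ)
    (S : Finset V) (hSV : S ≠ Finset.univ)
    (P : V → V → Finset V)
    (hP : ∀ u ∈ S, ∀ v ∈ Sᶜ,
      (u ∈ e → u ∈ P u v ∧ v ∉ P u v ∧
        ∀ T : Finset V, u ∈ T → v ∉ T → g (P u v ∩ e) ≤ g (T ∩ e)) ∧
      (u ∉ e → P u v = ∅)) :
    S ∩ e = S.biUnion (fun u => Sᶜ.inf (fun v => P u v ∩ e)) := by
  refine inter_eq_biUnion_inf_of_separating hSV e P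
    (fun u hu v hv => ((hP u (mem_inter.1 hu).1 v hv).1 (mem_inter.1 hu).2).1) ?_
  intro u hu v hv
  by_cases hue : u ∈ e
  · exact ((hP u hu v hv).1 hue).2.1
  · simp [(hP u hu v hv).2 hue]

theorem stmt3 {V : Type*} [Fintype V] [DecidableEq V]
    (e : Finset V) (g : Finset V → ℝ)
    (hg0 : g ∅ = 0)
    (hnn : ∀ S ⊆ e, 0 ≤ g S)
    (hsub : ∀ A ⊆ e, ∀ B ⊆ e, g (A ∪ B) + g (A ∩ B) ≤ g A + g B)
    (S : Finset V) (hS0 : S ≠ ∅) (hSV : S ≠ Finset.univ)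
    (P : V → V → Finset V)
    (hP : ∀ u ∈ S, ∀ v ∈ Sᶜ,
      (u ∈ e → u ∈ P u v ∧ v ∉ P u v ∧
        ∀ T : Finset V, u ∈ T → v ∉ T → g (P u v ∩ e) ≤ g (T ∩ e)) ∧
      (u ∉ e → P u v = ∅)) :
    S ∩ e = S.biUnion (fun u => Sᶜ.inf (fun v => P u v ∩ e)) :=
  stmt3_general e g S hSV P hP
end

section
/- Let H = (V, E) be a finite collection of hyperedges with monotone submodular splitting functions g_f : 2^f → ℝ≥0, g_f(∅)=0. Fix e ∈ E and define ρ_e := ∑_{v ∈ V} g_e({v} ∩ e) / (∑_{f ∈ E} g_f({v} ∩ f)) with the convention that a fraction with zero denominator is zero. Then for every S ⊆ V with cut_H(S) > 0, g_e(S ∩ e) / cut_H(S) ≤ ρ_e, and moreover ∑_{e ∈ E} ρ_e ≤ |V|. -/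
/-- Over-estimated importance of hyperedge `e` (monotone case); in Lean, `x / 0 = 0`,
matching the convention that a fraction with zero denominator is zero. -/
noncomputable def rhoMono {V ι : Type*} [Fintype V] [DecidableEq V]
    (E : Finset ι) (edge : ι → Finset V) (g : ι → Finset V → ℝ) (e : ι) : ℝ :=
  ∑ v : V, g e ({v} ∩ edge e) / ∑ f ∈ E, g f ({v} ∩ edge f)

/-- The cut value of `S` in the submodular hypergraph. -/
def cutH {V ι : Type*} [DecidableEq V]
    (E : Finset ι) (edge : ι → Finset V) (g : ι → Finset V → ℝ)
    (S : Finset V) : ℝ :=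
  ∑ f ∈ E, g f (S ∩ edge f)

/-!
Subadditivity of a submodular `g_e` with `g_e(∅) = 0` bounds `g_e(S ∩ e)` by the sum of its values
on the singletons `{v}`, `v ∈ S`. Each such value is at most the cut of `{v}`, and by monotonicity
the cut of `{v}` is at most the cut of `S`, so each summand is at most its share
`g_e({v} ∩ e) / cut_H({v})` of `cut_H(S)`; summing gives `ρ_e`. Summed over all edges, these shares
become `cut_H({v}) / cut_H({v}) ≤ 1` for each vertex.
-/

open Finset

theorem le_div_mul_of_le_of_le {a d c : ℝ} (ha : 0 ≤ a) (had : a ≤ d) (hdc : d ≤ c) :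
    a ≤ a / d * c := by
  rcases (ha.trans had).eq_or_lt with hd | hd
  · simp [le_antisymm (hd ▸ had) ha]
  · calc a = a / d * d := (div_mul_cancel₀ a hd.ne').symm
      _ ≤ a / d * c := by gcongr

section SetFunction

variable {V : Type*} {T : Finset V} {h : Finset V → ℝ}

theorem nonneg_of_monotone_of_empty (h0 : h ∅ = 0)
    (hmono : ∀ A ⊆ T, ∀ B ⊆ T, A ⊆ B → h A ≤ h B) {S : Finset V} (hS : S ⊆ T) : 0 ≤ h S :=
  h0 ▸ hmono ∅ (empty_subset T) S hS (empty_subset S)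

theorem le_sum_singleton_inter_of_submodular [DecidableEq V] (h0 : h ∅ = 0)
    (hmono : ∀ A ⊆ T, ∀ B ⊆ T, A ⊆ B → h A ≤ h B)
    (hsub : ∀ A ⊆ T, ∀ B ⊆ T, h (A ∪ B) + h (A ∩ B) ≤ h A + h B) (S : Finset V) :
    h (S ∩ T) ≤ ∑ v ∈ S, h ({v} ∩ T) := by
  induction S using Finset.induction with
  | empty => simp [h0]
  | @insert a s ha ih =>
    rw [sum_insert ha, insert_eq, union_inter_distrib_right]
    have hunion := hsub ({a} ∩ T) inter_subset_right (s ∩ T) inter_subset_right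
    have hinter : 0 ≤ h (({a} ∩ T) ∩ (s ∩ T)) :=
      nonneg_of_monotone_of_empty h0 hmono (inter_subset_right.trans inter_subset_right)
    linarith

end SetFunction

section Hypergraph

variable {V ι : Type*} [DecidableEq V] {E : Finset ι} {edge : ι → Finset V}
  {g : ι → Finset V → ℝ}

theorem rhoMono_eq_sum_div_cutH_singleton [Fintype V] (e : ι) :
    rhoMono E edge g e = ∑ v : V, g e ({v} ∩ edge e) / cutH E edge g {v} :=
  rfl

theorem cutH_mono (hmono : ∀ f ∈ E, ∀ A ⊆ edge f, ∀ B ⊆ edge f, A ⊆ B → g f A ≤ g f B)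
    {S S' : Finset V} (hSS' : S ⊆ S') : cutH E edge g S ≤ cutH E edge g S' :=
  sum_le_sum fun f hf =>
    hmono f hf _ inter_subset_right _ inter_subset_right (inter_subset_inter_right hSS')

theorem le_cutH (hg0 : ∀ f ∈ E, g f ∅ = 0)
    (hmono : ∀ f ∈ E, ∀ A ⊆ edge f, ∀ B ⊆ edge f, A ⊆ B → g f A ≤ g f B)
    {e : ι} (he : e ∈ E) (S : Finset V) : g e (S ∩ edge e) ≤ cutH E edge g S :=
  single_le_sum (f := fun f => g f (S ∩ edge f))
    (fun f hf => nonneg_of_monotone_of_empty (hg0 f hf) (hmono f hf) inter_subset_right) he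

theorem div_cutH_le_rhoMono [Fintype V] (hg0 : ∀ f ∈ E, g f ∅ = 0)
    (hmono : ∀ f ∈ E, ∀ A ⊆ edge f, ∀ B ⊆ edge f, A ⊆ B → g f A ≤ g f B)
    (hsub : ∀ f ∈ E, ∀ A ⊆ edge f, ∀ B ⊆ edge f, g f (A ∪ B) + g f (A ∩ B) ≤ g f A + g f B)
    {e : ι} (he : e ∈ E) {S : Finset V} (hS : 0 < cutH E edge g S) :
    g e (S ∩ edge e) / cutH E edge g S ≤ rhoMono E edge g e := by
  have hnn : ∀ v, 0 ≤ g e ({v} ∩ edge e) := fun v =>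
    nonneg_of_monotone_of_empty (hg0 e he) (hmono e he) inter_subset_right
  rw [div_le_iff₀ hS, rhoMono_eq_sum_div_cutH_singleton, sum_mul]
  calc g e (S ∩ edge e) ≤ ∑ v ∈ S, g e ({v} ∩ edge e) :=
        le_sum_singleton_inter_of_submodular (hg0 e he) (hmono e he) (hsub e he) S
    _ ≤ ∑ v ∈ S, g e ({v} ∩ edge e) / cutH E edge g {v} * cutH E edge g S :=
        sum_le_sum fun v hv => le_div_mul_of_le_of_le (hnn v) (le_cutH hg0 hmono he {v})
          (cutH_mono hmono (singleton_subset_iff.2 hv))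
    _ ≤ ∑ v : V, g e ({v} ∩ edge e) / cutH E edge g {v} * cutH E edge g S :=
        sum_le_sum_of_subset_of_nonneg (subset_univ S) fun v _ _ =>
          mul_nonneg (div_nonneg (hnn v) ((hnn v).trans (le_cutH hg0 hmono he {v}))) hS.le

theorem sum_rhoMono_le_card [Fintype V] :
    ∑ e ∈ E, rhoMono E edge g e ≤ Fintype.card V := by
  simp only [rhoMono_eq_sum_div_cutH_singleton]
  rw [sum_comm]
  calc ∑ v : V, ∑ e ∈ E, g e ({v} ∩ edge e) / cutH E edge g {v}
      = ∑ v : V, cutH E edge g {v} / cutH E edge g {v} := by simp only [← sum_div, cutH]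
    _ ≤ ∑ _v : V, (1 : ℝ) := sum_le_sum fun v _ => div_self_le_one _
    _ = Fintype.card V := by simp

end Hypergraph

theorem stmt6_general {V ι : Type*} [Fintype V] [DecidableEq V]
    (E : Finset ι) (edge : ι → Finset V) (g : ι → Finset V → ℝ)
    (hg0 : ∀ f ∈ E, g f ∅ = 0)
    (hmono : ∀ f ∈ E, ∀ A ⊆ edge f, ∀ B ⊆ edge f, A ⊆ B → g f A ≤ g f B)
    (hsub : ∀ f ∈ E, ∀ A ⊆ edge f, ∀ B ⊆ edge f,
      g f (A ∪ B) + g f (A ∩ B) ≤ g f A + g f B)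
    (e : ι) (he : e ∈ E) :
    (∀ S : Finset V, 0 < cutH E edge g S →
      g e (S ∩ edge e) / cutH E edge g S ≤ rhoMono E edge g e) ∧
    ∑ e' ∈ E, rhoMono E edge g e' ≤ (Fintype.card V : ℝ) :=
  ⟨fun _ hS => div_cutH_le_rhoMono hg0 hmono hsub he hS, sum_rhoMono_le_card⟩

theorem stmt6 {V ι : Type*} [Fintype V] [DecidableEq V]
    (E : Finset ι) (edge : ι → Finset V) (g : ι → Finset V → ℝ)
    (hg0 : ∀ f ∈ E, g f ∅ = 0)
    (hnn : ∀ f ∈ E, ∀ S ⊆ edge f, 0 ≤ g f S)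
    (hmono : ∀ f ∈ E, ∀ A ⊆ edge f, ∀ B ⊆ edge f, A ⊆ B → g f A ≤ g f B)
    (hsub : ∀ f ∈ E, ∀ A ⊆ edge f, ∀ B ⊆ edge f,
      g f (A ∪ B) + g f (A ∩ B) ≤ g f A + g f B)
    (e : ι) (he : e ∈ E) :
    (∀ S : Finset V, 0 < cutH E edge g S →
      g e (S ∩ edge e) / cutH E edge g S ≤ rhoMono E edge g e) ∧
    ∑ e' ∈ E, rhoMono E edge g e' ≤ (Fintype.card V : ℝ) :=
  stmt6_general E edge g hg0 hmono hsub e he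
end

section
/- Every cardinality-based symmetric submodular splitting function g on a finite set e with g(S) = ĝ(|S|), ĝ(0) = ĝ(|e|) = 0, and ĝ not identically zero has spread μ := max_{T} g(T) / min_{S ∉ {∅, e}} g(S) at most |e|. -/
theorem stmt10 {α : Type*} [DecidableEq α] (e : Finset α)
    (ghat : ℕ → ℝ) (g : Finset α → ℝ)
    (hcard : ∀ S ⊆ e, g S = ghat S.card)
    (hnn : ∀ i ≤ e.card, 0 ≤ ghat i)
    (h0 : ghat 0 = 0) (htop : ghat e.card = 0)
    (hsym : ∀ i ≤ e.card, ghat i = ghat (e.card - i))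
    (hsub : ∀ A ⊆ e, ∀ B ⊆ e, g (A ∪ B) + g (A ∩ B) ≤ g A + g B)
    (hne : ∃ i ≤ e.card, ghat i ≠ 0) :
    (∀ S ⊆ e, S ≠ ∅ → S ≠ e → 0 < g S) ∧
    (∀ T ⊆ e, ∀ S ⊆ e, S ≠ ∅ → S ≠ e → g T ≤ (e.card : ℝ) * g S) := by
  set n := e.card with hn
  -- discrete concavity
  have hconc : ∀ k, 1 ≤ k → k + 1 ≤ n → ghat (k+1) + ghat (k-1) ≤ 2 * ghat k := by
    intro k hk1 hkn
    obtain ⟨U, hUe, hUcard⟩ := Finset.exists_subset_card_eq hkn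
    have h2 : 1 < U.card := by omega
    obtain ⟨x, hx, y, hy, hxy⟩ := Finset.one_lt_card.mp h2
    have hA : U.erase x ⊆ e := (Finset.erase_subset _ _).trans hUe
    have hB : U.erase y ⊆ e := (Finset.erase_subset _ _).trans hUe
    have hsub' := hsub _ hA _ hB
    have hunion : U.erase x ∪ U.erase y = U := by
      ext z
      simp only [Finset.mem_union, Finset.mem_erase]
      constructor
      · rintro (⟨_, h⟩ | ⟨_, h⟩) <;> exact h
      · intro hz
        by_cases hzx : z = x
        · exact Or.inr ⟨by simpa [hzx] using hxy, hz⟩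
        · exact Or.inl ⟨hzx, hz⟩
    have hinter : U.erase x ∩ U.erase y = (U.erase x).erase y := by
      ext z
      simp only [Finset.mem_inter, Finset.mem_erase]
      tauto
    have hcA : (U.erase x).card = k := by
      rw [Finset.card_erase_of_mem hx, hUcard]; omega
    have hcB : (U.erase y).card = k := by
      rw [Finset.card_erase_of_mem hy, hUcard]; omega
    have hyA : y ∈ U.erase x := Finset.mem_erase.mpr ⟨hxy.symm, hy⟩
    have hcI : ((U.erase x).erase y).card = k - 1 := by
      rw [Finset.card_erase_of_mem hyA, hcA]
    rw [hunion, hinter] at hsub'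
    rw [hcard _ hUe, hcard _ hA, hcard _ hB,
        hcard _ ((Finset.erase_subset _ _).trans hA)] at hsub'
    rw [hUcard, hcA, hcB, hcI] at hsub'
    linarith
  -- step lemma
  have hstep : ∀ k, k + 1 ≤ n → (k:ℝ) * ghat (k+1) ≤ (k+1) * ghat k := by
    intro k
    induction k with
    | zero => intro h; simp [h0]
    | succ k ih =>
      intro h
      have hc := hconc (k+1) (by omega) (by omega)
      simp only [Nat.add_sub_cancel] at hc
      have ih' := ih (by omega)
      have hmul := mul_le_mul_of_nonneg_left hc (show (0:ℝ) ≤ (k:ℝ)+1 by positivity)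
      push_cast
      nlinarith [hnn (k+1) (by omega)]
  -- chord lemma
  have hchord : ∀ i j, 1 ≤ i → i ≤ j → j ≤ n → (i:ℝ) * ghat j ≤ (j:ℝ) * ghat i := by
    intro i j hi hij hjn
    induction j with
    | zero => omega
    | succ j ih =>
      rcases Nat.lt_or_ge i (j+1) with hlt | hge
      · have hij' : i ≤ j := by omega
        have ih' := ih hij' (by omega)
        have hs := hstep j (by omega)
        have hjpos : (0:ℝ) < (j:ℝ) := by
          have : 1 ≤ j := by omega
          exact_mod_cast Nat.lt_of_lt_of_le Nat.zero_lt_one this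
        have key : (j:ℝ) * ((i:ℝ) * ghat (j+1)) ≤ (j:ℝ) * (((j:ℝ)+1) * ghat i) := by
          have h1 := mul_le_mul_of_nonneg_left hs (show (0:ℝ) ≤ (i:ℝ) by positivity)
          have h2 := mul_le_mul_of_nonneg_left ih' (show (0:ℝ) ≤ (j:ℝ)+1 by positivity)
          nlinarith
        have := (mul_le_mul_iff_right₀ hjpos).mp key
        push_cast
        linarith
      · have : i = j + 1 := by omega
        subst this
        push_cast
        linarith
  -- mirrored chord lemma
  have hchord2 : ∀ i j, j ≤ i → i + 1 ≤ n → ((n - i : ℕ):ℝ) * ghat j ≤ ((n - j : ℕ):ℝ) * ghat i := by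
    intro i j hji hin
    have h := hchord (n - i) (n - j) (by omega) (by omega) (by omega)
    have e1 : ghat (n - j) = ghat j := (hsym j (by omega)).symm
    have e2 : ghat (n - i) = ghat i := (hsym i (by omega)).symm
    rw [e1, e2] at h
    exact h
  obtain ⟨m, hmn, hmne⟩ := hne
  have hmpos : 0 < ghat m := lt_of_le_of_ne (hnn m hmn) (Ne.symm hmne)
  have hm0 : 1 ≤ m := by
    rcases Nat.eq_zero_or_pos m with h | h
    · exact absurd (h ▸ h0) hmne
    · exact h
  have hmn' : m + 1 ≤ n := by
    rcases Nat.lt_or_ge m n with h | h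
    · omega
    · exfalso; have : m = n := le_antisymm hmn h
      exact hmne (this ▸ htop)
  -- positivity of interior values
  have hposcard : ∀ i, 1 ≤ i → i + 1 ≤ n → 0 < ghat i := by
    intro i hi1 hin
    rcases le_or_gt i m with h | h
    · -- i ≤ m : use hchord i m
      have hc := hchord i m hi1 h hmn
      have : (0:ℝ) < (i:ℝ) * ghat m := by
        have : (0:ℝ) < (i:ℝ) := by exact_mod_cast hi1
        positivity
      nlinarith [hnn i (by omega), this]
    · -- m ≤ i : use hchord2
      have hc := hchord2 i m (le_of_lt h) hin
      have h1 : (0:ℝ) < ((n - i : ℕ):ℝ) * ghat m := by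
        have : (0:ℝ) < ((n - i : ℕ):ℝ) := by
          have : 1 ≤ n - i := by omega
          exact_mod_cast Nat.lt_of_lt_of_le Nat.zero_lt_one this
        positivity
      nlinarith [hnn i (by omega)]
  have hScard : ∀ S ⊆ e, S ≠ ∅ → S ≠ e → 1 ≤ S.card ∧ S.card + 1 ≤ n := by
    intro S hSe hS0 hSne
    constructor
    · exact Finset.card_pos.mpr (Finset.nonempty_of_ne_empty hS0)
    · have : S ⊂ e := lt_of_le_of_ne hSe hSne
      have := Finset.card_lt_card this
      omega
  constructor
  · intro S hSe hS0 hSne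
    obtain ⟨h1, h2⟩ := hScard S hSe hS0 hSne
    rw [hcard S hSe]
    exact hposcard _ h1 h2
  · intro T hTe S hSe hS0 hSne
    obtain ⟨hi1, hin⟩ := hScard S hSe hS0 hSne
    set i := S.card
    set j := T.card with hj
    have hjn : j ≤ n := Finset.card_le_card hTe
    rw [hcard T hTe, hcard S hSe]
    have hgi := hposcard i hi1 hin
    have hnr : (0:ℝ) ≤ (n:ℝ) := by positivity
    rcases Nat.eq_zero_or_pos j with hj0 | hj1
    · rw [← hj, hj0, h0]; positivity
    rcases Nat.eq_or_lt_of_le hjn with hjtop | hjlt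
    · rw [← hj, hjtop, htop]; positivity
    rcases le_or_gt i j with h | h
    · have hc := hchord i j hi1 h hjn
      have hgj := hnn j (by omega)
      have hi' : (1:ℝ) ≤ (i:ℝ) := by exact_mod_cast hi1
      have hjle : (j:ℝ) ≤ (n:ℝ) := by exact_mod_cast hjn
      nlinarith
    · have hc := hchord2 i j (le_of_lt h) hin
      have hgj := hnn j (by omega)
      have h1 : (1:ℝ) ≤ ((n - i : ℕ):ℝ) := by
        have : 1 ≤ n - i := by omega
        exact_mod_cast this
      have h2 : ((n - j : ℕ):ℝ) ≤ (n:ℝ) := by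
        have : n - j ≤ n := Nat.sub_le _ _
        exact_mod_cast this
      nlinarith
end
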